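/- arXiv:2002.01206 — 5 statements merged into one kernel-verified Lean document; each statement's English description precedes it below -/
import Mathlib

section
/- If a countable group G acts effectively (faithfully) on the real line ℝ by orientation-preserving homeomorphisms, then G is left-orderable; that is, there exists a total order < on G such that for all g, h, h' in G, h < h' implies g·h < g·h'. -/
/-!
Well-order the real line as an index set, independently of its usual order, and compare `g` and
`h` by the usual order of `φ g x` and `φ h x` at the first point `x` of that well-order where they
differ. Faithfulness makes this a strict total order on `G`, and it is left-invariant because
postcomposing with the increasing map `φ g` moves neither that point nor the direction of the
comparison.
-/

namespace Pi

variable {ι β : Type*}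

theorem isStrictTotalOrder_lex [LinearOrder β] (r : ι → ι → Prop) [IsWellOrder ι r] :
    IsStrictTotalOrder (ι → β) (Pi.Lex r (· < ·)) where
  toTrichotomous := trichotomous_lex r _ IsWellFounded.wf
  irrefl x := fun ⟨i, _, hi⟩ => lt_irrefl (x i) hi
  trans := by
    rintro x y z ⟨i, hxy, hi⟩ ⟨j, hyz, hj⟩
    rcases trichotomous_of r i j with hij | rfl | hji
    · exact ⟨i, fun k hk => (hxy k hk).trans (hyz k (_root_.trans hk hij)), hyz i hij ▸ hi⟩
    · exact ⟨i, fun k hk => (hxy k hk).trans (hyz k hk), hi.trans hj⟩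
    · exact ⟨j, fun k hk => (hxy k (_root_.trans hk hji)).trans (hyz k hk), (hxy j hji).symm ▸ hj⟩

theorem lex_comp_of_strictMono {γ : Type*} [Preorder β] [Preorder γ] {r : ι → ι → Prop}
    {f : β → γ} (hf : StrictMono f) {x y : ι → β} (h : Pi.Lex r (· < ·) x y) :
    Pi.Lex r (· < ·) (f ∘ x) (f ∘ y) :=
  let ⟨i, hxy, hi⟩ := h
  ⟨i, fun j hj => congrArg f (hxy j hj), hf hi⟩

end Pi

theorem MonoidHom.exists_leftInvariant_isStrictTotalOrder_of_injective_of_strictMono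
    {M α : Type*} [Monoid M] [LinearOrder α] (φ : M →* Equiv.Perm α)
    (hφ : Function.Injective φ) (hmono : ∀ g, StrictMono (φ g)) :
    ∃ r : M → M → Prop, IsStrictTotalOrder M r ∧ ∀ g h h' : M, r h h' → r (g * h) (g * h') := by
  let e : M ↪ (α → α) := ⟨fun g => φ g, DFunLike.coe_injective.comp hφ⟩
  have := Pi.isStrictTotalOrder_lex (β := α) (WellOrderingRel (α := α))
  refine ⟨e ⁻¹'o Pi.Lex WellOrderingRel (· < ·), (RelEmbedding.preimage e _).isStrictTotalOrder,
    fun g h h' hlt => ?_⟩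
  simpa [e, Order.Preimage] using Pi.lex_comp_of_strictMono (hmono g) hlt

theorem countable_group_faithful_orientation_preserving_action_on_real_line_leftOrderable_general
    (G : Type) [Group G] (φ : G →* Equiv.Perm ℝ)
    (horient : ∀ g : G, StrictMono (φ g))
    (hinj : Function.Injective φ) :
    ∃ r : G → G → Prop, IsStrictTotalOrder G r ∧
      ∀ g h h' : G, r h h' → r (g * h) (g * h') :=
  φ.exists_leftInvariant_isStrictTotalOrder_of_injective_of_strictMono hinj horient

/-- If a countable group `G` acts effectively (faithfully) on the real line `ℝ` by
orientation-preserving homeomorphisms, then `G` is left-orderable: there is a strict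
total order on `G` invariant under left multiplication.  An action by homeomorphisms
is encoded as a homomorphism to `Equiv.Perm ℝ` whose values, together with their
inverses, are continuous; orientation-preserving means strictly monotone increasing. -/
theorem countable_group_faithful_orientation_preserving_action_on_real_line_leftOrderable
    (G : Type) [Group G] [Countable G] (φ : G →* Equiv.Perm ℝ)
    (hcont : ∀ g : G, Continuous (φ g))
    (hcont' : ∀ g : G, Continuous ((φ g).symm))
    (horient : ∀ g : G, StrictMono (φ g))
    (hinj : Function.Injective φ) :
    ∃ r : G → G → Prop, IsStrictTotalOrder G r ∧
      ∀ g h h' : G, r h h' → r (g * h) (g * h') :=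
  countable_group_faithful_orientation_preserving_action_on_real_line_leftOrderable_general G φ
    horient hinj
end

section
/- Let G be a group with a left-invariant total order, and let a, b, c be elements of G with a > 1, b > 1, c > 1 and [a,b] = aba⁻¹b⁻¹ = c⁻¹. If a < c^k and b < c^k for some positive integer k, then for sufficiently large m the element a^m b^m (a⁻¹c^k)^m (b⁻¹c^k)^m equals c^(−m²+2km), which is < 1, contradicting that it is a product of positive elements. Hence either a > c^s for all positive integers s, or b > c^s for all positive integers s. -/
private lemma key_aux1 {G : Type} [Group G] {a b c : G}
    (hab : a * b = c⁻¹ * (b * a)) (hcb : Commute c b) :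
    ∀ n : ℕ, a * b ^ n = (c ^ n)⁻¹ * (b ^ n * a) := by
  intro n
  induction n with
  | zero => simp
  | succ n ih =>
    have hc' : Commute (c ^ (n+1))⁻¹ b := ((hcb.pow_left (n+1)).inv_left)
    calc a * b ^ (n+1) = (a * b ^ n) * b := by rw [pow_succ, mul_assoc]
      _ = (c ^ n)⁻¹ * (b ^ n * (a * b)) := by rw [ih]; group
      _ = (c ^ n)⁻¹ * (b ^ n * (c⁻¹ * (b * a))) := by rw [hab]
      _ = (c ^ n)⁻¹ * ((c⁻¹ * b ^ n) * (b * a)) := by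
            rw [(hcb.pow_right n).inv_left.eq]; group
      _ = (c ^ (n+1))⁻¹ * (b ^ (n+1) * a) := by
            rw [pow_succ, pow_succ, mul_inv_rev]; group

private lemma key_aux2 {G : Type} [Group G] {a b c : G}
    (hab : a * b = c⁻¹ * (b * a)) (hca : Commute c a) (hcb : Commute c b) :
    ∀ m n : ℕ, a ^ m * b ^ n = (c ^ (m * n))⁻¹ * (b ^ n * a ^ m) := by
  intro m n
  induction m with
  | zero => simp
  | succ m ih =>
    calc a ^ (m+1) * b ^ n = a ^ m * (a * b ^ n) := by rw [pow_succ']; group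
      _ = a ^ m * ((c ^ n)⁻¹ * (b ^ n * a)) := by rw [key_aux1 hab hcb n]
      _ = a ^ m * (c ^ n)⁻¹ * (b ^ n * a) := by group
      _ = (c ^ n)⁻¹ * a ^ m * (b ^ n * a) := by
            rw [← ((hca.pow_left n).inv_left.pow_right m).eq]
      _ = (c ^ n)⁻¹ * (a ^ m * b ^ n) * a := by group
      _ = (c ^ n)⁻¹ * ((c ^ (m * n))⁻¹ * (b ^ n * a ^ m)) * a := by rw [ih]
      _ = (c ^ ((m+1) * n))⁻¹ * (b ^ n * a ^ (m+1)) := by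
            rw [show (m+1) * n = m * n + n by ring, pow_add, mul_inv_rev, pow_succ]
            group

private lemma key_identity {G : Type} [Group G] {a b c : G}
    (hcomm : a * b * a⁻¹ * b⁻¹ = c⁻¹) (hca : Commute c a) (hcb : Commute c b)
    (k m : ℕ) :
    a ^ m * b ^ m * (a⁻¹ * c ^ k) ^ m * (b⁻¹ * c ^ k) ^ m
      = (c ^ (m * m))⁻¹ * c ^ (k * m) * c ^ (k * m) := by
  have hab : a * b = c⁻¹ * (b * a) := by
    have := hcomm
    group at this ⊢
    rw [← this]; group
  have h1 : (a⁻¹ * c ^ k) ^ m = (a⁻¹) ^ m * (c ^ k) ^ m :=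
    (hca.symm.inv_left.pow_right k).mul_pow m
  have h2 : (b⁻¹ * c ^ k) ^ m = (b⁻¹) ^ m * (c ^ k) ^ m :=
    (hcb.symm.inv_left.pow_right k).mul_pow m
  have h3 : Commute ((c ^ k) ^ m) ((b ^ m)⁻¹) :=
    (((hcb.pow_left k).pow_left m).pow_right m).inv_right
  have h4 := key_aux2 hab hca hcb m m
  calc a ^ m * b ^ m * (a⁻¹ * c ^ k) ^ m * (b⁻¹ * c ^ k) ^ m
      = a ^ m * b ^ m * ((a⁻¹) ^ m * (c ^ k) ^ m) * ((b⁻¹) ^ m * (c ^ k) ^ m) := by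
        rw [h1, h2]
    _ = a ^ m * b ^ m * ((a ^ m)⁻¹ * (c ^ k) ^ m) * ((b ^ m)⁻¹ * (c ^ k) ^ m) := by
        rw [inv_pow a, inv_pow b]
    _ = a ^ m * b ^ m * (a ^ m)⁻¹ * ((c ^ k) ^ m * (b ^ m)⁻¹) * (c ^ k) ^ m := by group
    _ = a ^ m * b ^ m * (a ^ m)⁻¹ * ((b ^ m)⁻¹ * (c ^ k) ^ m) * (c ^ k) ^ m := by
        rw [h3.eq]
    _ = (a ^ m * b ^ m * (a ^ m)⁻¹ * (b ^ m)⁻¹) * (c ^ k) ^ m * (c ^ k) ^ m := by group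
    _ = (c ^ (m * m))⁻¹ * c ^ (k * m) * c ^ (k * m) := by
        have h5 : a ^ m * b ^ m * (a ^ m)⁻¹ * (b ^ m)⁻¹ = (c ^ (m * m))⁻¹ := by
          rw [show a ^ m * b ^ m * (a ^ m)⁻¹ * (b ^ m)⁻¹
              = (a ^ m * b ^ m) * (a ^ m)⁻¹ * (b ^ m)⁻¹ from by group, h4]
          group
        rw [h5, ← pow_mul]

/-- Let `G` be a group with a left-invariant strict total order `r` (we write `r x y`
for `x < y`), and let `a b c : G` be positive elements (`1 < a`, `1 < b`, `1 < c`)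
such that `[a,b] = a b a⁻¹ b⁻¹ = c⁻¹` and `c` commutes with `a` and `b`.
Then either `a > c^s` for every positive integer `s`, or `b > c^s` for every
positive integer `s`. -/
theorem pos_commutator_dominates (G : Type) [Group G]
    (r : G → G → Prop) (htotal : IsStrictTotalOrder G r)
    (hleft : ∀ g h h' : G, r h h' → r (g * h) (g * h'))
    (a b c : G)
    (ha : r 1 a) (hb : r 1 b) (hc : r 1 c)
    (hcomm : a * b * a⁻¹ * b⁻¹ = c⁻¹)
    (hca : c * a = a * c) (hcb : c * b = b * c) :
    (∀ s : ℕ, 0 < s → r (c ^ s) a) ∨ (∀ s : ℕ, 0 < s → r (c ^ s) b) := by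
  by_contra hcon
  push_neg at hcon
  obtain ⟨⟨s₁, hs₁, hra⟩, ⟨s₂, hs₂, hrb⟩⟩ := hcon
  haveI := htotal
  haveI : DecidableRel r := Classical.decRel r
  letI : LinearOrder G := linearOrderOfSTO r
  have hlt : ∀ x y : G, (x < y) = r x y := fun x y => rfl
  haveI : CovariantClass G G (· * ·) (· < ·) := ⟨fun g x y h => hleft g x y h⟩
  haveI : CovariantClass G G (· * ·) (· ≤ ·) := covariantClass_le_of_lt G G (· * ·)
  have ha' : (1 : G) < a := ha
  have hb' : (1 : G) < b := hb
  have hc' : (1 : G) < c := hc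
  -- a ≤ c ^ s₁, b ≤ c ^ s₂
  have hA : a ≤ c ^ s₁ := not_lt.mp hra
  have hB : b ≤ c ^ s₂ := not_lt.mp hrb
  set k := max s₁ s₂ with hk
  have hck : ∀ s t : ℕ, s ≤ t → c ^ s ≤ c ^ t := by
    intro s t hst
    calc c ^ s = c ^ s * 1 := (mul_one _).symm
      _ ≤ c ^ s * c ^ (t - s) := mul_le_mul_right (one_le_pow_of_one_le' hc'.le _) _
      _ = c ^ t := by rw [← pow_add, Nat.add_sub_cancel' hst]
  have hAk : a ≤ c ^ k := hA.trans (hck _ _ (le_max_left _ _))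
  have hBk : b ≤ c ^ k := hB.trans (hck _ _ (le_max_right _ _))
  set m := 2 * k + 1 with hm
  have hone : (1 : G) ≤ a ^ m * b ^ m * (a⁻¹ * c ^ k) ^ m * (b⁻¹ * c ^ k) ^ m := by
    have h1 : (1 : G) ≤ a⁻¹ * c ^ k := by
      calc (1 : G) = a⁻¹ * a := (inv_mul_cancel a).symm
        _ ≤ a⁻¹ * c ^ k := mul_le_mul_right hAk _
    have h2 : (1 : G) ≤ b⁻¹ * c ^ k := by
      calc (1 : G) = b⁻¹ * b := (inv_mul_cancel b).symm
        _ ≤ b⁻¹ * c ^ k := mul_le_mul_right hBk _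
    exact one_le_mul (one_le_mul (one_le_mul
      (one_le_pow_of_one_le' ha'.le m) (one_le_pow_of_one_le' hb'.le m))
      (one_le_pow_of_one_le' h1 m)) (one_le_pow_of_one_le' h2 m)
  have heq : a ^ m * b ^ m * (a⁻¹ * c ^ k) ^ m * (b⁻¹ * c ^ k) ^ m = (c ^ m)⁻¹ := by
    rw [key_identity hcomm hca hcb k m]
    rw [show m * m = k * m + k * m + m by rw [hm]; ring]
    rw [pow_add, pow_add]
    group
  rw [heq] at hone
  have hcm : (1 : G) < c ^ m := one_lt_pow' hc' (by omega)
  exact absurd (lt_of_le_of_lt hone (Left.inv_lt_one_iff.mpr hcm)) (lt_irrefl 1)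
end

section
/- No finite-index subgroup of SL₃(ℤ) is left-orderable. -/
/-!
In a left-ordered group, let `1 < a`, `1 < b`, `1 < z`, where `z` commutes with `a` and `b` and
`a * b = b * a * z ^ k` with `k ≠ 0` (wlog `k > 0`). Then `z < a` or `z < b`: otherwise
`a ^ 3 * b ^ 3 ≤ z ^ 6`, whereas `a ^ 3 * b ^ 3 = z ^ (9 * k) * b ^ 3 * a ^ 3 > z ^ 9`.

A finite-index subgroup of `SL₃(ℤ)` contains `e_ij(N)` for all `i ≠ j` and some `N ≠ 0` (the index
of its normal core). Up to inverting, all six are positive; the largest, `e_ik(±N)`, is then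
neither below `e_ij(±N)` nor below `e_jk(±N)`, contradicting the relation
`[e_ij(a), e_jk(b)] = e_ik(a * b)`.
-/

namespace Matrix.SpecialLinearGroup

variable {ι F : Type*} [DecidableEq ι] [Fintype ι] [CommRing F] {i j k l : ι}

lemma transvection_zsmul (hij : i ≠ j) (m : ℤ) (b : F) :
    transvection hij (m • b) = transvection hij b ^ m :=
  map_zpow (MonoidHom.mk' (fun x : Multiplicative F ↦ transvection hij x.toAdd)
    fun _ _ ↦ transvection_add hij _ _) (Multiplicative.ofAdd b) m

lemma transvection_ne_one (hij : i ≠ j) {b : F} (hb : b ≠ 0) : transvection hij b ≠ 1 := by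
  intro h
  exact hb (by simpa [transvection_coe, hij] using congr($h i j))

lemma commute_transvection (hij : i ≠ j) (hkl : k ≠ l) (hjk : j ≠ k) (hli : l ≠ i) (a b : F) :
    Commute (transvection hij a) (transvection hkl b) := Subtype.ext <| by
  simp only [coe_mul, transvection_coe, mul_add, mul_one, add_mul, one_mul, add_zero,
    single_mul_single_of_ne _ _ _ _ hjk, single_mul_single_of_ne _ _ _ _ hli]
  abel

lemma transvection_mul_transvection_of_ne (hij : i ≠ j) (hjk : j ≠ k) (hik : i ≠ k) (a b : F) :
    transvection hij a * transvection hjk b =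
      transvection hjk b * transvection hij a * transvection hik (a * b) := Subtype.ext <| by
  simp only [coe_mul, transvection_coe, mul_add, mul_one, add_mul, one_mul, add_zero,
    single_mul_single_same, single_mul_single_of_ne _ _ _ _ hik.symm,
    single_mul_single_of_ne _ _ _ _ hij.symm]
  abel

end Matrix.SpecialLinearGroup

section Heisenberg

variable {G : Type*} [Group G] {a b c : G}

lemma mul_pow_of_mul_eq_mul_mul (h : a * b = b * a * c) (hbc : Commute b c) (j : ℕ) :
    a * b ^ j = b ^ j * a * c ^ j := by
  induction j with
  | zero => simp
  | succ j ih =>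
    calc a * b ^ (j + 1) = b ^ j * a * (c ^ j * b) := by rw [pow_succ, ← mul_assoc, ih]; group
      _ = b ^ j * (a * b) * c ^ j := by rw [← (hbc.pow_right j).eq]; group
      _ = b ^ (j + 1) * a * c ^ (j + 1) := by rw [h]; group

lemma pow_mul_of_mul_eq_mul_mul (h : a * b = b * a * c) (hac : Commute a c) (i : ℕ) :
    a ^ i * b = b * a ^ i * c ^ i := by
  induction i with
  | zero => simp
  | succ i ih =>
    calc a ^ (i + 1) * b = (a * b) * a ^ i * c ^ i := by rw [pow_succ', mul_assoc, ih]; group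
      _ = b * a * (c * a ^ i) * c ^ i := by rw [h]; group
      _ = b * a ^ (i + 1) * c ^ (i + 1) := by rw [← (hac.pow_left i).eq]; group

lemma pow_mul_pow_of_mul_eq_mul_mul (h : a * b = b * a * c) (hac : Commute a c)
    (hbc : Commute b c) (i j : ℕ) : a ^ i * b ^ j = b ^ j * a ^ i * c ^ (i * j) := by
  rw [pow_mul_of_mul_eq_mul_mul (mul_pow_of_mul_eq_mul_mul h hbc j) (hac.pow_right j) i,
    ← pow_mul, mul_comm]

end Heisenberg

section LeftOrderedGroup

variable {G : Type*} [Group G] [LinearOrder G] [MulLeftMono G] {a b z : G}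

lemma pow_le_pow_left_of_commute (hab : Commute a b) (h : a ≤ b) (n : ℕ) : a ^ n ≤ b ^ n := by
  induction n with
  | zero => simp
  | succ n ih =>
    calc a ^ (n + 1) = a ^ n * a := pow_succ a n
      _ ≤ a ^ n * b := mul_le_mul_right h _
      _ = b * a ^ n := (hab.pow_left n).eq
      _ ≤ b * b ^ n := mul_le_mul_right ih b
      _ = b ^ (n + 1) := (pow_succ' b n).symm

lemma lt_or_lt_of_mul_eq_mul_mul_pow (ha : 1 < a) (hb : 1 < b) (hz : 1 < z)
    (hza : Commute z a) (hzb : Commute z b) {m : ℕ} (hm : m ≠ 0) (h : a * b = b * a * z ^ m) :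
    z < a ∨ z < b := by
  by_contra! ⟨haz, hbz⟩
  have upper : a ^ 3 * b ^ 3 ≤ z ^ 6 :=
    calc a ^ 3 * b ^ 3 ≤ a ^ 3 * z ^ 3 :=
          mul_le_mul_right (pow_le_pow_left_of_commute hzb.symm hbz 3) _
      _ = z ^ 3 * a ^ 3 := (hza.symm.pow_pow 3 3).eq
      _ ≤ z ^ 3 * z ^ 3 := mul_le_mul_right (pow_le_pow_left_of_commute hza.symm haz 3) _
      _ = z ^ 6 := by rw [← pow_add]
  have lower : z ^ 6 < a ^ 3 * b ^ 3 :=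
    calc z ^ 6 < z ^ (m * (3 * 3)) := pow_lt_pow_right' hz (by omega)
      _ < z ^ (m * (3 * 3)) * (b ^ 3 * a ^ 3) :=
          lt_mul_of_one_lt_right' _
            (one_lt_mul' (one_lt_pow' hb three_ne_zero) (one_lt_pow' ha three_ne_zero))
      _ = a ^ 3 * b ^ 3 := by
          rw [pow_mul_pow_of_mul_eq_mul_mul h (hza.pow_left m).symm (hzb.pow_left m).symm,
            ← pow_mul]
          exact ((hzb.pow_pow _ 3).mul_right (hza.pow_pow _ 3)).eq
  exact upper.not_gt lower

lemma lt_or_lt_of_mul_eq_mul_mul_zpow (ha : 1 < a) (hb : 1 < b) (hz : 1 < z)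
    (hza : Commute z a) (hzb : Commute z b) {k : ℤ} (hk : k ≠ 0) (h : a * b = b * a * z ^ k) :
    z < a ∨ z < b := by
  obtain ⟨m, rfl | rfl⟩ := Int.eq_nat_or_neg k
  · exact lt_or_lt_of_mul_eq_mul_mul_pow ha hb hz hza hzb (m := m) (by omega) (by simpa using h)
  · refine (lt_or_lt_of_mul_eq_mul_mul_pow hb ha hz hzb hza (m := m) (by omega) ?_).symm
    rw [h]
    group

end LeftOrderedGroup

section LeftOrderedSubgroup

open Matrix.SpecialLinearGroup

variable {n : Type*} [DecidableEq n] [Fintype n] {i j k : n}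

lemma transvection_mul_index_normalCore_mem (H : Subgroup (Matrix.SpecialLinearGroup n ℤ))
    (hij : i ≠ j) (c : ℤ) : transvection hij (c * H.normalCore.index) ∈ H := by
  rw [mul_comm, ← smul_eq_mul, transvection_zsmul, zpow_natCast]
  exact H.normalCore_le (H.normalCore.pow_index_mem _)

variable {H : Subgroup (Matrix.SpecialLinearGroup n ℤ)} [LinearOrder H] [MulLeftMono H]

lemma exists_one_lt_transvection_mem (hij : i ≠ j) {N : ℤ} (hN : N ≠ 0)
    (hmem : ∀ c : ℤ, transvection hij (c * N) ∈ H) : ∃ s : ℤˣ, 1 < (⟨_, hmem s⟩ : H) := by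
  have hne : (⟨_, hmem 1⟩ : H) ≠ 1 := fun h ↦
    transvection_ne_one hij (by simpa using hN) congr(Subtype.val $h)
  rcases hne.lt_or_gt with h | h
  · refine ⟨-1, ?_⟩
    convert Left.one_lt_inv_iff.mpr h using 1
    ext1
    simp [transvection_inv]
  · exact ⟨1, by simpa using h⟩

lemma lt_or_lt_of_transvection_mem (hij : i ≠ j) (hjk : j ≠ k) (hik : i ≠ k) {a b c : ℤ}
    (hab : a * b ≠ 0) (hcab : c ∣ a * b) (ha : transvection hij a ∈ H)
    (hb : transvection hjk b ∈ H) (hc : transvection hik c ∈ H)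
    (ha1 : 1 < (⟨_, ha⟩ : H)) (hb1 : 1 < (⟨_, hb⟩ : H)) (hc1 : 1 < (⟨_, hc⟩ : H)) :
    (⟨_, hc⟩ : H) < ⟨_, ha⟩ ∨ (⟨_, hc⟩ : H) < ⟨_, hb⟩ := by
  obtain ⟨m, hm⟩ := hcab
  refine lt_or_lt_of_mul_eq_mul_mul_zpow ha1 hb1 hc1
    (Subtype.ext (commute_transvection hik hij hik.symm hij.symm c a).eq)
    (Subtype.ext (commute_transvection hik hjk hjk.symm hik.symm c b).eq)
    (k := m) (by rintro rfl; simp_all) (Subtype.ext ?_)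
  simp only [Subgroup.coe_mul, SubgroupClass.coe_zpow]
  rw [← transvection_zsmul, smul_eq_mul, mul_comm m, ← hm,
    transvection_mul_transvection_of_ne hij hjk hik]

end LeftOrderedSubgroup

/-- No finite-index subgroup of `SL₃(ℤ)` is left-orderable: a finite-index subgroup
`H` of `SL₃(ℤ)` admits no strict total order invariant under left multiplication. -/
theorem finiteIndex_subgroup_SL3_not_leftOrderable
    (H : Subgroup (Matrix.SpecialLinearGroup (Fin 3) ℤ)) (hH : H.FiniteIndex) :
    ¬ ∃ r : H → H → Prop, IsStrictTotalOrder H r ∧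
        ∀ g h h' : H, r h h' → r (g * h) (g * h') := by
  rintro ⟨r, _, hmul⟩
  classical
  let : LinearOrder H := linearOrderOfSTO r
  have : MulLeftStrictMono H := ⟨fun g _ _ h ↦ hmul g _ _ h⟩
  have := mulLeftMono_of_mulLeftStrictMono H
  have hN : (H.normalCore.index : ℤ) ≠ 0 := by simp [Subgroup.FiniteIndex.index_ne_zero]
  have hmem {i j : Fin 3} (hij : i ≠ j) := transvection_mul_index_normalCore_mem H hij
  choose s hs using fun ρ : {p : Fin 3 × Fin 3 // p.1 ≠ p.2} ↦
    exists_one_lt_transvection_mem ρ.2 hN (hmem ρ.2)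
  have : Nonempty {p : Fin 3 × Fin 3 // p.1 ≠ p.2} := ⟨⟨(0, 1), by decide⟩⟩
  obtain ⟨⟨⟨i, k⟩, hik⟩, hmax⟩ := Finite.exists_max fun ρ ↦ (⟨_, hmem ρ.2 (s ρ)⟩ : H)
  obtain ⟨j, hij, hjk⟩ := (by decide : ∀ i k : Fin 3, i ≠ k → ∃ j, i ≠ j ∧ j ≠ k) i k hik
  rcases lt_or_lt_of_transvection_mem hij hjk hik
    (mul_ne_zero (mul_ne_zero (s _).ne_zero hN) (mul_ne_zero (s _).ne_zero hN))
    (mul_dvd_mul (s _).isUnit.dvd (dvd_mul_left _ _)) _ _ _ (hs ⟨(i, j), hij⟩)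
    (hs ⟨(j, k), hjk⟩) (hs ⟨(i, k), hik⟩) with h | h
  exacts [(hmax ⟨(i, j), hij⟩).not_gt h, (hmax ⟨(j, k), hjk⟩).not_gt h]
end

section
/- For n ≥ 3, SL_n(ℤ) is a perfect group: it equals its own commutator subgroup. -/
/-
The elementary matrices `e_ij(c)` generate `SL_n(ℤ)`. Columns are cleared one at a time; on the
next column, Euclid's algorithm with row operations whose source row is not the index of a cleared
column (these keep the cleared columns intact) leaves a single nonzero entry in such rows. It is a
unit because `M⁻¹ * M = 1`, so with it one puts a `1` on the diagonal, which then clears the rest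
of the column. The last column needs no reduction, its diagonal entry being `det M = 1`.
For `n ≥ 3` each generator is a commutator, `e_ij(c) = ⁅e_ik(c), e_kj(1)⁆` for any `k ∉ {i, j}`.
-/

open Matrix Finset

open scoped commutatorElement

namespace Matrix.SpecialLinearGroup

variable {ι R : Type*} [Fintype ι] [DecidableEq ι] [CommRing R]

variable (ι R) in
def elementarySubgroup : Subgroup (SpecialLinearGroup ι R) :=
  Subgroup.closure (Set.range TransvectionStruct.toSpecialLinearGroup)

theorem transvection_mem_elementarySubgroup {i j : ι} (hij : i ≠ j) (c : R) :
    transvection hij c ∈ elementarySubgroup ι R :=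
  Subgroup.subset_closure ⟨⟨i, j, hij, c⟩, rfl⟩

theorem transvection_eq_commutator {i j k : ι} (hij : i ≠ j) (hik : i ≠ k) (hkj : k ≠ j) (c : R) :
    transvection hij c = ⁅transvection hik c, transvection hkj 1⁆ := by
  refine Subtype.ext ?_
  simp only [transvection_coe, commutatorElement_def, transvection_inv, coe_mul, mul_add, mul_one,
    add_mul, one_mul, single_mul_single_same, ← single_neg, mul_neg, neg_mul, add_zero,
    single_mul_single_of_ne _ _ _ _ hik.symm, single_mul_single_of_ne _ _ _ _ hij.symm,
    single_mul_single_of_ne _ _ _ _ hkj.symm, add_neg_cancel_right]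
  abel

theorem elementarySubgroup_le_commutator (h : 2 < Fintype.card ι) :
    elementarySubgroup ι R ≤ commutator (SpecialLinearGroup ι R) := by
  refine (Subgroup.closure_le _).mpr ?_
  rintro _ ⟨⟨i, j, hij, c⟩, rfl⟩
  obtain ⟨k, -, hk⟩ := exists_mem_notMem_of_card_lt_card (s := {i, j}) (t := univ)
    ((card_le_two).trans_lt h)
  simp only [mem_insert, mem_singleton, not_or] at hk
  rw [TransvectionStruct.toSpecialLinearGroup_mk,
    transvection_eq_commutator hij (Ne.symm hk.1) hk.2]
  exact Subgroup.commutator_mem_commutator (Subgroup.mem_top _) (Subgroup.mem_top _)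

theorem transvection_mul_apply {i j : ι} (hij : i ≠ j) (c : R) (M : SpecialLinearGroup ι R)
    (a b : ι) : (transvection hij c * M) a b = if a = i then M a b + c * M j b else M a b := by
  split_ifs with ha
  · subst ha; exact transvection_mul_apply_same a j b c M
  · exact transvection_mul_apply_of_ne i j a b ha c M

variable (R) in
def fixingCols (C : Finset ι) : Subgroup (SpecialLinearGroup ι R) :=
  fixingSubgroup _ ((fun c ↦ Pi.single c (1 : R)) '' (C : Set ι))

theorem mem_fixingCols {C : Finset ι} {M : SpecialLinearGroup ι R} :
    M ∈ fixingCols R C ↔ ∀ c ∈ C, ∀ i, M i c = (1 : Matrix ι ι R) i c := by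
  simp only [fixingCols, mem_fixingSubgroup_iff, Set.forall_mem_image, Finset.mem_coe,
    SpecialLinearGroup.smul_def, smul_eq_mulVec, mulVec_single_one, funext_iff, col_apply,
    one_apply, Pi.single_apply]

@[simp]
theorem fixingCols_empty : fixingCols R (∅ : Finset ι) = ⊤ := by
  ext M; simp [mem_fixingCols]

@[simp]
theorem fixingCols_univ : fixingCols R (univ : Finset ι) = ⊥ := by
  ext M
  simp only [mem_fixingCols, mem_univ, forall_const, Subgroup.mem_bot]
  exact ⟨fun h ↦ Subtype.ext (Matrix.ext fun i c ↦ h c i), fun h c i ↦ by simp [h]⟩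

theorem transvection_mem_fixingCols {C : Finset ι} {i j : ι} (hj : j ∉ C) (hij : i ≠ j) (c : R) :
    transvection hij c ∈ fixingCols R C := by
  rw [mem_fixingCols]
  intro k hk a
  have hkj : k ≠ j := by rintro rfl; exact hj hk
  simp [transvection_coe, hkj.symm]

theorem isUnit_apply_of_mem_fixingCols {C : Finset ι} {M : SpecialLinearGroup ι R}
    (hM : M ∈ fixingCols R C) {j p : ι} (hj : j ∉ C) (hcol : ∀ i ∉ C, i ≠ p → M i j = 0) :
    IsUnit (M p j) := by
  have hinv := mem_fixingCols.1 (inv_mem hM)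
  -- row `j` of `M⁻¹` vanishes on the columns in `C`
  have h : (M⁻¹ * M) j j = M⁻¹ j p * M p j := by
    rw [coe_mul, mul_apply]
    refine sum_eq_single p (fun i _ hip ↦ ?_) (by simp)
    by_cases hi : i ∈ C
    · rw [hinv i hi j, one_apply_ne (ne_of_mem_of_not_mem hi hj).symm, zero_mul]
    · rw [hcol i hi hip, mul_zero]
  rw [inv_mul_cancel, coe_one, one_apply_eq] at h
  exact .of_mul_eq_one_right _ h.symm

theorem apply_self_eq_one_of_mem_fixingCols {C : Finset ι} {M : SpecialLinearGroup ι R}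
    (hM : M ∈ fixingCols R C) {j : ι} (hC : ∀ c, c ≠ j → c ∈ C) : M j j = 1 := by
  have hM' : (M : Matrix ι ι R) = updateCol 1 j fun k ↦ ∑ i, M i j * (1 : Matrix ι ι R) k i := by
    ext a b
    by_cases hb : b = j
    · subst hb; simp [one_apply]
    · rw [updateCol_ne hb, mem_fixingCols.1 hM b (hC b hb)]
  have h := det_updateCol_sum (1 : Matrix ι ι R) j fun i ↦ M i j
  simp only [smul_eq_mul, ← hM', M.det_coe, det_one, mul_one] at h
  exact h.symm

theorem mem_elementarySubgroup_of_apply_self_eq_one {C : Finset ι} {j : ι} (hj : j ∉ C)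
    (hS : fixingCols R (insert j C) ≤ elementarySubgroup ι R) {M : SpecialLinearGroup ι R}
    (hM : M ∈ fixingCols R C) (hjj : M j j = 1) : M ∈ elementarySubgroup ι R := by
  suffices ∀ s : Finset ι, ∀ M ∈ fixingCols R C, M j j = 1 → (∀ i ∉ s, i ≠ j → M i j = 0) →
      M ∈ elementarySubgroup ι R from this univ M hM hjj (by simp)
  intro s
  induction s using Finset.induction_on with
  | empty =>
    intro M hM hjj hzero
    refine hS (mem_fixingCols.2 fun c hc i ↦ ?_)
    rcases mem_insert.1 hc with rfl | hc
    · by_cases hi : i = c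
      · subst hi; simp [hjj]
      · rw [hzero i (notMem_empty i) hi, one_apply_ne hi]
    · exact mem_fixingCols.1 hM c hc i
  | insert i s _ ih =>
    intro M hM hjj hzero
    by_cases hij : i = j
    · subst hij
      exact ih M hM hjj fun k hk hki ↦ hzero k (by simp [hk, hki]) hki
    rw [← Subgroup.mul_mem_cancel_left _ (transvection_mem_elementarySubgroup hij (-M i j))]
    refine ih _ (mul_mem (transvection_mem_fixingCols hj hij _) hM) ?_ fun k hk hkj ↦ ?_
    · rw [transvection_mul_apply, if_neg (Ne.symm hij), hjj]
    · rw [transvection_mul_apply]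
      split_ifs with hki
      · subst hki; simp [hjj]
      · exact hzero k (by simp [hki, hk]) hkj

theorem mem_elementarySubgroup_of_isUnit_apply_of_ne {C : Finset ι} {j : ι} (hj : j ∉ C)
    (hS : fixingCols R (insert j C) ≤ elementarySubgroup ι R) {M : SpecialLinearGroup ι R}
    (hM : M ∈ fixingCols R C) {p : ι} (hp : p ∉ C) (hpj : p ≠ j) (hu : IsUnit (M p j)) :
    M ∈ elementarySubgroup ι R := by
  obtain ⟨v, hv⟩ := hu.exists_left_inv
  rw [← Subgroup.mul_mem_cancel_left _
    (transvection_mem_elementarySubgroup hpj.symm ((1 - M j j) * v))]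
  refine mem_elementarySubgroup_of_apply_self_eq_one hj hS
    (mul_mem (transvection_mem_fixingCols hp hpj.symm _) hM) ?_
  rw [transvection_mul_apply, if_pos rfl, mul_assoc, hv]
  ring

theorem mem_elementarySubgroup_of_isUnit_apply {C : Finset ι} {j : ι} (hj : j ∉ C)
    (hS : fixingCols R (insert j C) ≤ elementarySubgroup ι R) {M : SpecialLinearGroup ι R}
    (hM : M ∈ fixingCols R C) {p : ι} (hp : p ∉ C) (hu : IsUnit (M p j))
    (hk : ∃ k ∉ C, k ≠ j) : M ∈ elementarySubgroup ι R := by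
  by_cases hpj : p = j
  · subst hpj
    obtain ⟨k, hkC, hkp⟩ := hk
    obtain ⟨v, hv⟩ := hu.exists_left_inv
    rw [← Subgroup.mul_mem_cancel_left _
      (transvection_mem_elementarySubgroup hkp ((1 - M k p) * v))]
    refine mem_elementarySubgroup_of_isUnit_apply_of_ne hj hS
      (mul_mem (transvection_mem_fixingCols hp hkp _) hM) hkC hkp ?_
    rw [transvection_mul_apply, if_pos rfl, mul_assoc, hv]
    simp
  · exact mem_elementarySubgroup_of_isUnit_apply_of_ne hj hS hM hp hpj hu

theorem exists_transvection_sum_natAbs_lt {C : Finset ι} {j p q : ι} (hp : p ∉ C) (hq : q ∉ C)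
    (hpq : p ≠ q) (M : SpecialLinearGroup ι ℤ) (hpj : M p j ≠ 0) (hqj : M q j ≠ 0) :
    ∃ T ∈ elementarySubgroup ι ℤ ⊓ fixingCols ℤ C,
      ∑ i ∈ Cᶜ, ((T * M) i j).natAbs < ∑ i ∈ Cᶜ, (M i j).natAbs := by
  wlog hle : (M q j).natAbs ≤ (M p j).natAbs generalizing p q
  · exact this hq hp hpq.symm hqj hpj (by omega)
  set T := transvection hpq (-(M p j / M q j))
  have hTp : ((T * M) p j).natAbs < (M p j).natAbs := by
    have h1 := Int.emod_nonneg (M p j) hqj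
    have h2 := Int.emod_lt (M p j) hqj
    have h3 : M p j + -(M p j / M q j) * M q j = M p j % M q j := by rw [Int.emod_def]; ring
    rw [transvection_mul_apply, if_pos rfl]
    omega
  refine ⟨T, ⟨transvection_mem_elementarySubgroup hpq _, transvection_mem_fixingCols hq hpq _⟩,
    sum_lt_sum (fun i _ ↦ ?_) ⟨p, by simpa using hp, hTp⟩⟩
  by_cases hip : i = p
  · exact hip ▸ hTp.le
  · rw [transvection_mul_apply, if_neg hip]

theorem exists_mul_apply_eq_zero_of_ne {C : Finset ι} {j : ι} (hj : j ∉ C)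
    (M : SpecialLinearGroup ι ℤ) : ∃ A ∈ elementarySubgroup ι ℤ ⊓ fixingCols ℤ C,
      ∃ p ∉ C, ∀ i ∉ C, i ≠ p → (A * M) i j = 0 := by
  induction hμ : ∑ i ∈ Cᶜ, (M i j).natAbs using Nat.strong_induction_on generalizing M with
  | _ μ ih =>
  by_cases hpair : ∃ p ∉ C, ∃ q ∉ C, p ≠ q ∧ M p j ≠ 0 ∧ M q j ≠ 0
  · obtain ⟨p, hp, q, hq, hpq, hpj, hqj⟩ := hpair
    obtain ⟨T, hT, hlt⟩ := exists_transvection_sum_natAbs_lt hp hq hpq M hpj hqj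
    obtain ⟨A, hA, r, hr, hzero⟩ := ih _ (hμ ▸ hlt) (T * M) rfl
    exact ⟨A * T, mul_mem hA hT, r, hr, by simpa only [mul_assoc] using hzero⟩
  push Not at hpair
  by_cases hnz : ∃ p ∉ C, M p j ≠ 0
  · obtain ⟨p, hp, hpj⟩ := hnz
    exact ⟨1, one_mem _, p, hp, fun i hi hip ↦ by simpa using hpair p hp i hi hip.symm hpj⟩
  push Not at hnz
  exact ⟨1, one_mem _, j, hj, fun i hi _ ↦ by simpa using hnz i hi⟩

theorem fixingCols_le_elementarySubgroup_of_insert {C : Finset ι} {j : ι} (hj : j ∉ C)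
    (hS : fixingCols ℤ (insert j C) ≤ elementarySubgroup ι ℤ) :
    fixingCols ℤ C ≤ elementarySubgroup ι ℤ := by
  intro M hM
  by_cases hk : ∃ k ∉ C, k ≠ j
  · obtain ⟨A, ⟨hAE, hAC⟩, p, hp, hzero⟩ := exists_mul_apply_eq_zero_of_ne hj M
    have hAM := mul_mem hAC hM
    rw [← Subgroup.mul_mem_cancel_left _ hAE]
    exact mem_elementarySubgroup_of_isUnit_apply hj hS hAM hp
      (isUnit_apply_of_mem_fixingCols hAM hj hzero) hk
  · push Not at hk
    exact mem_elementarySubgroup_of_apply_self_eq_one hj hS hM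
      (apply_self_eq_one_of_mem_fixingCols hM fun c hc ↦ by_contra fun h ↦ hc (hk c h))

theorem elementarySubgroup_int_eq_top : elementarySubgroup ι ℤ = ⊤ := by
  suffices ∀ D : Finset ι, fixingCols ℤ Dᶜ ≤ elementarySubgroup ι ℤ by
    simpa using this univ
  intro D
  induction D using Finset.induction_on with
  | empty => simp
  | insert j D hj ih =>
    exact fixingCols_le_elementarySubgroup_of_insert (C := (insert j D)ᶜ) (j := j)
      (by simp) (by rwa [insert_compl_insert hj])

theorem commutator_int_eq_top (h : 2 < Fintype.card ι) :
    commutator (SpecialLinearGroup ι ℤ) = ⊤ :=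
  top_le_iff.mp <| elementarySubgroup_int_eq_top.symm.le.trans <|
    elementarySubgroup_le_commutator h

end Matrix.SpecialLinearGroup

/-- For `n ≥ 3`, the group `SL_n(ℤ)` is perfect: it equals its own commutator
subgroup. -/
theorem SL_perfect (n : ℕ) (hn : 3 ≤ n) :
    commutator (Matrix.SpecialLinearGroup (Fin n) ℤ) = ⊤ :=
  Matrix.SpecialLinearGroup.commutator_int_eq_top (by rw [Fintype.card_fin]; exact hn)
end

section
/- Every finite group acting effectively on the circle S¹ by homeomorphisms is isomorphic to a subgroup of a dihedral group; equivalently, every finite subgroup of Homeo(S¹) is cyclic or dihedral. -/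
/-!
Let `S` be a finite subset of the circle with at least three points. Call two points of `S`
gap-adjacent when they are the two ends of a gap of `S`, i.e. both lie in the closure of a
connected set avoiding `S`. Lifting `S` to a periodic increasing sequence in `ℝ` shows that
gap-adjacency makes `S` an `n`-cycle, `n = #S`. The relation is topological, so a homeomorphism
preserving `S` induces an automorphism of this cycle, i.e. an element of the dihedral group of
order `2n`. For a finite group `G` acting faithfully, take for `S` the `G`-orbit of three points
together with one point moved by each `g ≠ 1`; then `G` embeds into the dihedral group.
-/

open Set Function

section GapAdjacent

variable {X Y : Type*} [TopologicalSpace X] [TopologicalSpace Y]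

def GapAdjacent (S : Set X) (a b : X) : Prop :=
  a ≠ b ∧
    ∃ C : Set X, IsPreconnected C ∧ Disjoint C S ∧ a ∈ closure C ∧ b ∈ closure C

lemma GapAdjacent.symm {S : Set X} {a b : X} (h : GapAdjacent S a b) : GapAdjacent S b a :=
  let ⟨hab, C, hC, hCS, ha, hb⟩ := h
  ⟨hab.symm, C, hC, hCS, hb, ha⟩

lemma GapAdjacent.map {S : Set X} {T : Set Y} {a b : X} {f : X → Y} (hf : Continuous f)
    (hinj : Injective f) (hT : f ⁻¹' T ⊆ S) (h : GapAdjacent S a b) :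
    GapAdjacent T (f a) (f b) := by
  obtain ⟨hab, C, hC, hCS, ha, hb⟩ := h
  refine ⟨hinj.ne hab, f '' C, hC.image f hf.continuousOn, ?_,
    mem_closure_image hf.continuousAt ha, mem_closure_image hf.continuousAt hb⟩
  rw [disjoint_left]
  rintro _ ⟨c, hc, rfl⟩ hcT
  exact disjoint_left.1 hCS hc (hT hcT)

structure IsGapCycle {n : ℕ} (S : Set X) (e : ZMod n → X) : Prop where
  injective : Injective e
  range_eq : range e = S
  gapAdjacent_iff : ∀ j k, GapAdjacent S (e j) (e k) ↔ k = j + 1 ∨ j = k + 1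

namespace IsGapCycle

variable {n : ℕ} {S : Set X} {e : ZMod n → X}

lemma image (he : IsGapCycle S e) (h : X ≃ₜ Y) : IsGapCycle (h '' S) (h ∘ e) where
  injective := h.injective.comp he.injective
  range_eq := by rw [range_comp, he.range_eq]
  gapAdjacent_iff j k := by
    rw [comp_apply, comp_apply, ← he.gapAdjacent_iff]
    refine ⟨fun hjk => ?_, fun hjk => hjk.map h.continuous h.injective
      (h.injective.preimage_image S).subset⟩
    simpa using hjk.map h.symm.continuous h.symm.injective
      (h.image_eq_preimage_symm S).superset

lemma ncard_eq (he : IsGapCycle S e) : S.ncard = n := by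
  rw [← he.range_eq, ← Nat.card_coe_set_eq, Nat.card_range_of_injective he.injective,
    Nat.card_zmod]

end IsGapCycle

end GapAdjacent

lemma exists_strictMono_lift_of_fin {n : ℕ} [NeZero n] (w : Fin n → ℝ) (hw : StrictMono w)
    (hw01 : ∀ r, w r ∈ Ico (0 : ℝ) 1) :
    ∃ u : ℤ → ℝ, StrictMono u ∧ (∀ k, u (k + n) = u k + 1) ∧
      ∀ x, x ∈ range u ↔ Int.fract x ∈ range w := by
  have hn : (0 : ℤ) < n := by exact_mod_cast Nat.pos_of_neZero n
  have hmod (k : ℤ) : (k % n).toNat < n := by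
    have := Int.emod_lt_of_pos k hn
    have := Int.emod_nonneg k hn.ne'
    omega
  set u : ℤ → ℝ := fun k => w ⟨(k % n).toNat, hmod k⟩ + (k / n : ℤ)
  have hu (q : ℤ) (r : Fin n) : u (n * q + r) = w r + q := by
    have hr : ((r : ℕ) : ℤ) < n := by exact_mod_cast r.isLt
    have hrem : (n * q + r) % n = r := by
      rw [Int.mul_add_emod_self_left]; exact Int.emod_eq_of_lt (by positivity) hr
    have hquot : (n * q + r) / n = q := by
      rw [Int.mul_add_ediv_left _ _ hn.ne', Int.ediv_eq_zero_of_lt (by positivity) hr,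
        add_zero]
    simp only [u, hrem, hquot, Int.toNat_natCast]
  have hdecomp (k : ℤ) : ∃ (q : ℤ) (r : Fin n), k = n * q + r :=
    ⟨k / n, ⟨(k % n).toNat, hmod k⟩, by
      rw [Int.toNat_of_nonneg (Int.emod_nonneg k hn.ne'), Int.mul_ediv_add_emod]⟩
  refine ⟨u, strictMono_int_of_lt_succ fun k => ?_, fun k => ?_,
    fun x => ⟨?_, fun hx => ?_⟩⟩
  · obtain ⟨q, r, rfl⟩ := hdecomp k
    by_cases hr : (r : ℕ) + 1 < n
    · rw [show n * q + r + 1 = n * q + ((⟨r + 1, hr⟩ : Fin n) : ℕ) by push_cast; ring,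
        hu, hu]
      exact add_lt_add_left (hw (Fin.mk_lt_mk.2 (Nat.lt_succ_self r))) _
    · have hr' : ((r : ℕ) : ℤ) + 1 = n := by omega
      rw [show n * q + r + 1 = n * (q + 1) + ((⟨0, Nat.pos_of_neZero n⟩ : Fin n) : ℕ) by
        push_cast; linear_combination hr', hu, hu]
      push_cast
      linarith [(hw01 r).2, (hw01 ⟨0, Nat.pos_of_neZero n⟩).1]
  · obtain ⟨q, r, rfl⟩ := hdecomp k
    rw [show n * q + r + n = n * (q + 1) + r by ring, hu, hu]
    push_cast
    ring
  · rintro ⟨k, rfl⟩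
    obtain ⟨q, r, rfl⟩ := hdecomp k
    rw [hu, Int.fract_add_intCast, Int.fract_eq_self.2 (hw01 r)]
    exact mem_range_self r
  · obtain ⟨r, hr⟩ := hx
    exact ⟨n * ⌊x⌋ + r, by rw [hu, hr, Int.fract_add_floor]⟩

namespace AddCircle

local notation "𝕋" => AddCircle (1 : ℝ)

structure IsSortedLift (S : Set 𝕋) (n : ℕ) (u : ℤ → ℝ) : Prop where
  strictMono : StrictMono u
  add_period : ∀ k, u (k + n) = u k + 1
  coe_mem_iff : ∀ x : ℝ, (x : 𝕋) ∈ S ↔ x ∈ range u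

lemma exists_isSortedLift {S : Set 𝕋} (hS : S.Finite) (hne : S.Nonempty) :
    ∃ (n : ℕ) (u : ℤ → ℝ), IsSortedLift S n u := by
  set T := Ico (0 : ℝ) 1 ∩ (↑) ⁻¹' S
  have hinjOn : InjOn ((↑) : ℝ → 𝕋) (Ico 0 1) := fun x hx y hy =>
    (coe_eq_coe_iff_of_mem_Ico (a := 0) (by rwa [zero_add]) (by rwa [zero_add])).1
  have hT : T.Finite := (hS.subset (image_subset_iff.2 inter_subset_right)).of_finite_image
    (hinjOn.mono inter_subset_left)
  have hfract (x : ℝ) : Int.fract x ∈ T ↔ (x : 𝕋) ∈ S := by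
    rw [← coe_fract]
    exact and_iff_right ⟨Int.fract_nonneg x, Int.fract_lt_one x⟩
  set F := hT.toFinset
  have : NeZero F.card := ⟨by
    obtain ⟨z, hz⟩ := hne
    obtain ⟨x, rfl⟩ := QuotientAddGroup.mk_surjective z
    exact (Finset.card_pos.2 ⟨Int.fract x, hT.mem_toFinset.2 ((hfract x).2 hz)⟩).ne'⟩
  obtain ⟨u, hu, hper, hrange⟩ := exists_strictMono_lift_of_fin (F.orderEmbOfFin rfl)
    (F.orderEmbOfFin rfl).strictMono fun r => (hT.mem_toFinset.1 (F.orderEmbOfFin_mem rfl r)).1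
  refine ⟨_, u, hu, hper, fun x => ?_⟩
  rw [hrange, Finset.range_orderEmbOfFin, hT.coe_toFinset, hfract]

namespace IsSortedLift

variable {S : Set 𝕋} {n : ℕ} {u : ℤ → ℝ}

lemma add_mul (hL : IsSortedLift S n u) (k m : ℤ) : u (k + n * m) = u k + m := by
  induction m using Int.induction_on with
  | zero => simp
  | succ i ih =>
    rw [show k + n * (i + 1) = k + n * i + n by ring, hL.add_period, ih]
    push_cast
    ring
  | pred i ih =>
    have := hL.add_period (k + n * (-i - 1))
    rw [show k + n * (-i - 1) + n = k + n * -(i : ℤ) by ring, ih] at this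
    push_cast at this ⊢
    linarith

lemma coe_eq_coe_iff (hL : IsSortedLift S n u) {i j : ℤ} :
    (u i : 𝕋) = u j ↔ (i : ZMod n) = j := by
  rw [ZMod.intCast_eq_intCast_iff_dvd_sub, ← sub_eq_zero, ← coe_sub, coe_eq_zero_iff]
  simp only [zsmul_eq_mul, mul_one]
  constructor
  · rintro ⟨m, hm⟩
    have := hL.strictMono.injective (show u i = u (j + n * m) by rw [hL.add_mul]; linarith)
    exact ⟨-m, by linarith⟩
  · rintro ⟨m, hm⟩
    have := hL.add_mul i m
    rw [show i + n * m = j by linarith] at this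
    exact ⟨-m, by push_cast; linarith⟩

lemma exists_mem_Ioo (hL : IsSortedLift S n u) {x : ℝ} (hx : x ∉ range u) :
    ∃ k, x ∈ Ioo (u k) (u (k + 1)) := by
  have hlt : x < u (n * (⌈x - u 0⌉ + 1)) := by
    rw [← zero_add (_ * _), hL.add_mul]
    push_cast
    linarith [Int.le_ceil (x - u 0)]
  have hle : u (n * ⌊x - u 0⌋) ≤ x := by
    rw [← zero_add (_ * _), hL.add_mul]
    linarith [Int.floor_le (x - u 0)]
  obtain ⟨k, hk, hmax⟩ := Int.exists_greatest_of_bdd (P := fun k => u k ≤ x)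
    ⟨_, fun z hz => hL.strictMono.le_iff_le.1 (hz.trans hlt.le)⟩ ⟨_, hle⟩
  refine ⟨k, hk.lt_of_ne fun h => hx ⟨k, h⟩, lt_of_not_ge fun h => ?_⟩
  exact (lt_add_one k).not_ge (hmax _ h)

lemma disjoint_image_Ioo (hL : IsSortedLift S n u) (k : ℤ) :
    Disjoint (((↑) : ℝ → 𝕋) '' Ioo (u k) (u (k + 1))) S := by
  rw [disjoint_left]
  rintro _ ⟨x, hx, rfl⟩ hxS
  obtain ⟨i, rfl⟩ := (hL.coe_mem_iff x).1 hxS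
  exact hL.strictMono.monotone.ne_of_lt_of_lt_int k hx.1 hx.2 i rfl

lemma subset_image_Ioo_of_isPreconnected (hL : IsSortedLift S n u) {C : Set 𝕋}
    (hC : IsPreconnected C) (hCS : Disjoint C S) {k : ℤ}
    (hk : (C ∩ (↑) '' Ioo (u k) (u (k + 1))).Nonempty) :
    C ⊆ (↑) '' Ioo (u k) (u (k + 1)) := by
  have hK : IsClosed (((↑) : ℝ → 𝕋) '' Icc (u k) (u (k + 1))) :=
    (isCompact_Icc.image (AddCircle.continuous_mk' 1)).isClosed
  -- Separate `C` by the open arc and the complement of the closed arc: the two endpoints lie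
  -- in `S`, hence not in `C`.
  refine hC.subset_left_of_subset_union (QuotientAddGroup.isOpenMap_coe _ isOpen_Ioo)
    hK.isOpen_compl (disjoint_compl_right_iff_subset.2 (image_mono Ioo_subset_Icc_self))
    (fun c hc => ?_) hk
  by_cases hcK : c ∈ ((↑) : ℝ → 𝕋) '' Icc (u k) (u (k + 1))
  · obtain ⟨x, hx, rfl⟩ := hcK
    have hxS (i : ℤ) : u i ≠ x := fun h =>
      disjoint_left.1 hCS hc ((hL.coe_mem_iff x).2 ⟨i, h⟩)
    exact Or.inl ⟨x, ⟨hx.1.lt_of_ne (hxS k), hx.2.lt_of_ne (hxS (k + 1)).symm⟩, rfl⟩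
  · exact Or.inr hcK

lemma closure_image_Ioo_inter_subset (hL : IsSortedLift S n u) (k : ℤ) :
    closure (((↑) : ℝ → 𝕋) '' Ioo (u k) (u (k + 1))) ∩ S ⊆
      {(u k : 𝕋), (u (k + 1) : 𝕋)} := by
  rintro z ⟨hz, hzS⟩
  obtain ⟨x, hx, rfl⟩ := closure_minimal (image_mono Ioo_subset_Icc_self)
    (isCompact_Icc.image (AddCircle.continuous_mk' 1)).isClosed hz
  obtain ⟨i, rfl⟩ := (hL.coe_mem_iff x).1 hzS
  have := hL.strictMono.le_iff_le.1 hx.1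
  have := hL.strictMono.le_iff_le.1 hx.2
  obtain rfl | rfl : i = k ∨ i = k + 1 := by omega
  exacts [Or.inl rfl, Or.inr rfl]

lemma gapAdjacent (hL : IsSortedLift S n u) {k : ℤ} (hne : (u k : 𝕋) ≠ u (k + 1)) :
    GapAdjacent S (u k : 𝕋) (u (k + 1)) := by
  have hlt := hL.strictMono (lt_add_one k)
  refine ⟨hne, _, isPreconnected_Ioo.image _ (AddCircle.continuous_mk' 1).continuousOn,
    hL.disjoint_image_Ioo k, ?_, ?_⟩ <;>
    refine mem_closure_image (AddCircle.continuous_mk' 1).continuousAt ?_ <;>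
    simp [closure_Ioo hlt.ne, hlt.le]

lemma exists_mem_pair_of_gapAdjacent (hL : IsSortedLift S n u) {a b : 𝕋}
    (h : GapAdjacent S a b) (ha : a ∈ S) (hb : b ∈ S) :
    ∃ i : ℤ, a ∈ ({(u i : 𝕋), (u (i + 1) : 𝕋)} : Set 𝕋) ∧
      b ∈ ({(u i : 𝕋), (u (i + 1) : 𝕋)} : Set 𝕋) := by
  obtain ⟨-, C, hC, hCS, haC, hbC⟩ := h
  obtain ⟨c, hc⟩ := closure_nonempty_iff.1 ⟨a, haC⟩
  obtain ⟨x, rfl⟩ := QuotientAddGroup.mk_surjective c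
  obtain ⟨i, hi⟩ := hL.exists_mem_Ioo fun hx => disjoint_left.1 hCS hc ((hL.coe_mem_iff x).2 hx)
  have hCi := hL.subset_image_Ioo_of_isPreconnected hC hCS ⟨_, hc, x, hi, rfl⟩
  exact ⟨i, hL.closure_image_Ioo_inter_subset i ⟨closure_mono hCi haC, ha⟩,
    hL.closure_image_Ioo_inter_subset i ⟨closure_mono hCi hbC, hb⟩⟩

theorem isGapCycle (hL : IsSortedLift S n u) (hS : S.Nontrivial) :
    IsGapCycle S fun m : ZMod n => (u m.val : 𝕋) := by
  have : NeZero n := ⟨by rintro rfl; simpa using hL.add_period 0⟩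
  set e : ZMod n → 𝕋 := fun m => (u m.val : 𝕋)
  have he (k : ℤ) : e k = u k := hL.coe_eq_coe_iff.2 (by simp)
  have he' (k : ℤ) : e (k + 1) = u (k + 1) := by simpa using he (k + 1)
  have hinj : Injective e := fun a b h => by simpa using hL.coe_eq_coe_iff.1 h
  have hrange : range e = S := by
    refine (range_subset_iff.2 fun m => (hL.coe_mem_iff _).2 (mem_range_self _)).antisymm
      fun z hz => ?_
    obtain ⟨x, rfl⟩ := QuotientAddGroup.mk_surjective z
    obtain ⟨k, rfl⟩ := (hL.coe_mem_iff x).1 hz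
    exact ⟨k, he k⟩
  have : Nontrivial (ZMod n) := by
    rw [← hrange] at hS
    obtain ⟨_, ⟨j, rfl⟩, _, ⟨k, rfl⟩, hjk⟩ := hS
    exact nontrivial_of_ne j k (ne_of_apply_ne e hjk)
  refine ⟨hinj, hrange, fun j k => ⟨fun hjk => ?_, ?_⟩⟩
  · obtain ⟨i, hj, hk⟩ := hL.exists_mem_pair_of_gapAdjacent hjk
      (hrange ▸ mem_range_self j) (hrange ▸ mem_range_self k)
    rw [← he, ← he'] at hj hk
    simp only [mem_insert_iff, mem_singleton_iff, hinj.eq_iff] at hj hk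
    have hne := hinj.ne_iff.1 hjk.1
    rcases hj with rfl | rfl <;> rcases hk with rfl | rfl
    exacts [absurd rfl hne, .inl rfl, .inr rfl, absurd rfl hne]
  · have hadj (j : ZMod n) : GapAdjacent S (e j) (e (j + 1)) := by
      obtain ⟨i, rfl⟩ := ZMod.intCast_surjective j
      rw [he, he']
      refine hL.gapAdjacent ?_
      rw [← he, ← he', hinj.ne_iff]
      simp
    rintro (rfl | rfl)
    exacts [hadj j, (hadj k).symm]

end IsSortedLift

theorem exists_isGapCycle {S : Set 𝕋} (hS : S.Finite) (hS2 : S.Nontrivial) :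
    ∃ (n : ℕ) (e : ZMod n → 𝕋), IsGapCycle S e := by
  obtain ⟨n, u, hL⟩ := exists_isSortedLift hS hS2.nonempty
  exact ⟨n, _, hL.isGapCycle hS2⟩

end AddCircle

lemma exists_isGapCycle_of_homeomorph {X : Type*} [TopologicalSpace X]
    (h : X ≃ₜ AddCircle (1 : ℝ)) {S : Set X} (hS : S.Finite) (hS2 : S.Nontrivial) :
    ∃ (n : ℕ) (e : ZMod n → X), IsGapCycle S e := by
  obtain ⟨n, e, he⟩ := AddCircle.exists_isGapCycle (hS.image h) (hS2.image h.injective)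
  exact ⟨n, h.symm ∘ e, h.symm_image_image S ▸ he.image h.symm⟩

lemma ZMod.eq_add_mul_of_forall_add_one {n : ℕ} {f : ZMod n → ZMod n} {c : ZMod n}
    (h : ∀ k, f (k + 1) = f k + c) (k : ZMod n) : f k = f 0 + c * k := by
  obtain ⟨m, rfl⟩ := ZMod.intCast_surjective k
  induction m using Int.induction_on with
  | zero => simp
  | succ i ih => push_cast at ih ⊢; rw [h, ih]; ring
  | pred i ih =>
    have := h ((-i - 1 : ℤ) : ZMod n)
    push_cast at this ih ⊢
    rw [show (-(i : ZMod n) - 1 + 1) = -i by ring, ih] at this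
    linear_combination -this

lemma ZMod.two_ne_zero_of_three_le {n : ℕ} (hn : 3 ≤ n) : (2 : ZMod n) ≠ 0 := by
  rw [← Nat.cast_ofNat, Ne, ZMod.natCast_eq_zero_iff]
  exact fun h => absurd (Nat.le_of_dvd two_pos h) (by omega)

namespace DihedralGroup

variable {n : ℕ}

-- The signs are forced by the convention `r i * sr j = sr (j - i)` of `DihedralGroup`.
def toPerm (n : ℕ) : DihedralGroup n →* Equiv.Perm (ZMod n) where
  toFun
    | r i => Equiv.subRight i
    | sr i => Equiv.subLeft i
  map_one' := by ext k; exact sub_zero k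
  map_mul' := by rintro (i | i) (j | j) <;> ext k <;> simp <;> ring

lemma toPerm_injective (h2 : (2 : ZMod n) ≠ 0) : Injective (toPerm n) := by
  rw [injective_iff_map_eq_one]
  rintro (i | i) h
  · obtain rfl : i = 0 := by simpa [toPerm] using DFunLike.congr_fun h 0
    exact r_zero
  · have h0 := DFunLike.congr_fun h 0
    have h1 := DFunLike.congr_fun h 1
    simp [toPerm] at h0 h1
    exact absurd (by linear_combination h0 - h1) h2

lemma mem_range_toPerm (h2 : (2 : ZMod n) ≠ 0) {σ : Equiv.Perm (ZMod n)}
    (hσ : ∀ k, σ (k + 1) = σ k + 1 ∨ σ k = σ (k + 1) + 1) : σ ∈ (toPerm n).range := by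
  have hstep (k) : σ (k + 1) - σ k = 1 ∨ σ (k + 1) - σ k = -1 :=
    (hσ k).imp (fun h => by rw [h]; ring) (fun h => by rw [h]; ring)
  -- two opposite consecutive steps would give `σ (k + 2) = σ k`
  have hconst (k) : σ (k + 1 + 1) - σ (k + 1) = σ (k + 1) - σ k + 0 := by
    have hback : σ (k + 1 + 1) ≠ σ k := fun h =>
      h2 (by linear_combination σ.injective h)
    rcases hstep k with h | h <;> rcases hstep (k + 1) with h' | h'
    · rw [h, h', add_zero]
    · exact absurd (by linear_combination h + h') hback
    · exact absurd (by linear_combination h + h') hback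
    · rw [h, h', add_zero]
  have hδ := ZMod.eq_add_mul_of_forall_add_one (f := fun k => σ (k + 1) - σ k) hconst
  have hσk := ZMod.eq_add_mul_of_forall_add_one (f := σ) (c := σ (0 + 1) - σ 0)
    fun k => by linear_combination hδ k
  rcases hstep 0 with h | h <;> rw [h] at hσk
  · exact ⟨r (-σ 0), Equiv.ext fun k => by rw [hσk k]; simp [toPerm]; ring⟩
  · exact ⟨sr (σ 0), Equiv.ext fun k => by rw [hσk k]; simp [toPerm]; ring⟩

end DihedralGroup

lemma MonoidHom.exists_injective_of_range_le {G H K : Type*} [Group G] [Group H] [Group K]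
    {ρ : G →* K} (hρ : Injective ρ) {ι : H →* K} (hι : Injective ι)
    (hle : ρ.range ≤ ι.range) :
    ∃ Φ : G →* H, Injective Φ := by
  refine ⟨(ofInjective hι).symm.toMonoidHom.comp
    (ρ.codRestrict ι.range fun g => hle ⟨g, rfl⟩), fun a b hab => hρ ?_⟩
  simpa using congrArg Subtype.val ((ofInjective hι).symm.injective hab)

lemma exists_hom_perm_of_mapsTo_range {G X α : Type*} [Group G] (φ : G →* Equiv.Perm X)
    {e : α → X} (he : Injective e) (hmaps : ∀ g, MapsTo (φ g) (range e) (range e)) :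
    ∃ ρ : G →* Equiv.Perm α, ∀ g a, e (ρ g a) = φ g (e a) := by
  choose σ hσ using fun g a => hmaps g (mem_range_self a)
  have hmul (g h a) : σ (g * h) a = σ g (σ h a) := he (by simp [hσ])
  have hone (a) : σ 1 a = a := he (by simp [hσ])
  refine ⟨{ toFun g := ⟨σ g, σ g⁻¹, fun a => ?_, fun a => ?_⟩
            map_one' := Equiv.ext hone
            map_mul' g h := Equiv.ext (hmul g h) }, hσ⟩
  · rw [← hmul, inv_mul_cancel, hone]
  · rw [← hmul, mul_inv_cancel, hone]

namespace IsGapCycle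

variable {X : Type*} [TopologicalSpace X] {n : ℕ} {S : Set X} {e : ZMod n → X}

theorem exists_injective_hom_dihedralGroup {G : Type*} [Group G] (he : IsGapCycle S e)
    (h2 : (2 : ZMod n) ≠ 0) (φ : G →* Equiv.Perm X) (hcont : ∀ g, Continuous (φ g))
    (hmaps : ∀ g, MapsTo (φ g) S S) (hfaith : ∀ g, (∀ x ∈ S, φ g x = x) → g = 1) :
    ∃ Φ : G →* DihedralGroup n, Injective Φ := by
  rw [← he.range_eq] at hfaith
  obtain ⟨ρ, hρ⟩ := exists_hom_perm_of_mapsTo_range φ he.injective (he.range_eq ▸ hmaps)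
  refine MonoidHom.exists_injective_of_range_le (ρ := ρ) ?_
    (DihedralGroup.toPerm_injective h2) ?_
  · refine (injective_iff_map_eq_one ρ).2 fun g hg => hfaith g ?_
    rintro _ ⟨k, rfl⟩
    rw [← hρ, hg, Equiv.Perm.one_apply]
  · rintro _ ⟨g, rfl⟩
    refine DihedralGroup.mem_range_toPerm h2 fun k => (he.gapAdjacent_iff _ _).1 ?_
    rw [hρ, hρ]
    -- `φ g ⁻¹' S ⊆ S` because `S` is also invariant under `g⁻¹`
    refine ((he.gapAdjacent_iff k (k + 1)).2 (Or.inl rfl)).map (hcont g) (φ g).injective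
      fun x hx => ?_
    simpa using hmaps g⁻¹ hx

end IsGapCycle

lemma exists_finite_invariant_faithful_superset {G X : Type*} [Group G] [Finite G]
    (φ : G →* Equiv.Perm X) (hφ : Injective φ) {B : Set X} (hB : B.Finite) :
    ∃ S : Set X, S.Finite ∧ B ⊆ S ∧ (∀ g, MapsTo (φ g) S S) ∧
      ∀ g, (∀ x ∈ S, φ g x = x) → g = 1 := by
  have hmoved (g : G) : ∃ t : Set X, t.Finite ∧ ((∀ x ∈ t, φ g x = x) → g = 1) := by
    by_cases hg : g = 1
    · exact ⟨∅, finite_empty, fun _ => hg⟩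
    · obtain ⟨x, hx⟩ : ∃ x, φ g x ≠ x := by
        by_contra! h
        exact hg (hφ (by ext x; simp [h]))
      exact ⟨{x}, finite_singleton x, fun h => absurd (h x rfl) hx⟩
  choose t ht using hmoved
  refine ⟨⋃ g, φ g '' (B ∪ ⋃ h, t h),
    finite_iUnion fun g => (hB.union (finite_iUnion fun h => (ht h).1)).image _,
    fun x hx => mem_iUnion.2 ⟨1, x, Or.inl hx, by simp⟩, fun g y hy => ?_, fun g hg => ?_⟩
  · obtain ⟨h, x, hx, rfl⟩ := mem_iUnion.1 hy
    exact mem_iUnion.2 ⟨g * h, x, hx, by simp⟩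
  · exact (ht g).2 fun x hx =>
      hg x (mem_iUnion.2 ⟨1, x, Or.inr (mem_iUnion.2 ⟨g, hx⟩), by simp⟩)

instance : Nontrivial Circle := ⟨⟨Circle.exp Real.pi, 1, fun h => by
  obtain ⟨k, hk⟩ := Circle.exp_eq_one.1 h
  have : (2 * k : ℝ) = 1 := by nlinarith [Real.pi_pos]
  have : 2 * k = 1 := by exact_mod_cast this
  omega⟩⟩

theorem finite_group_acting_on_circle_subgroup_of_dihedral_general
    (G : Type) [Group G] [Finite G] (φ : G →* Equiv.Perm Circle)
    (hcont : ∀ g : G, Continuous (φ g))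
    (hinj : Function.Injective φ) :
    ∃ (m : ℕ) (H : Subgroup (DihedralGroup m)), Nonempty (G ≃* H) := by
  have : Infinite Circle := PreconnectedSpace.infinite
  obtain ⟨B, -, hBfin, hB3⟩ := (infinite_univ (α := Circle)).exists_subset_ncard_eq 3
  obtain ⟨S, hSfin, hBS, hmaps, hfaith⟩ :=
    exists_finite_invariant_faithful_superset φ hinj hBfin
  have hS3 : 3 ≤ S.ncard := hB3 ▸ ncard_le_ncard hBS hSfin
  obtain ⟨n, e, he⟩ := exists_isGapCycle_of_homeomorph
    (AddCircle.homeomorphCircle one_ne_zero).symm hSfin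
    (one_lt_ncard_iff_nontrivial_and_finite.1 (by omega)).1
  obtain ⟨Φ, hΦ⟩ := he.exists_injective_hom_dihedralGroup
    (ZMod.two_ne_zero_of_three_le (he.ncard_eq ▸ hS3)) φ hcont hmaps hfaith
  exact ⟨n, Φ.range, ⟨MonoidHom.ofInjective hΦ⟩⟩

/-- Every finite group acting effectively on the circle `S¹` by homeomorphisms is
isomorphic to a subgroup of a dihedral group (equivalently, every finite subgroup
of `Homeo(S¹)` is cyclic or dihedral).  The action by homeomorphisms is encoded as
an injective homomorphism to `Equiv.Perm Circle` with continuous values and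
inverses. -/
theorem finite_group_acting_on_circle_subgroup_of_dihedral
    (G : Type) [Group G] [Finite G] (φ : G →* Equiv.Perm Circle)
    (hcont : ∀ g : G, Continuous (φ g))
    (hcont' : ∀ g : G, Continuous ((φ g).symm))
    (hinj : Function.Injective φ) :
    ∃ (m : ℕ) (H : Subgroup (DihedralGroup m)), Nonempty (G ≃* H) :=
  finite_group_acting_on_circle_subgroup_of_dihedral_general G φ hcont hinj
end
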